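/- arXiv:1505.05382 — 11 statements merged into one kernel-verified Lean document; each statement's English description precedes it below -/
import Mathlib

section
/- If K1 = K(α1,α2) and K2 = K(β1,β2) are line segments in ℂ such that both segments lie on lines through the origin (i.e., 0, α1, α2 are collinear and 0, β1, β2 are collinear), then K1K2 equals the convex hull of {α1β1, α1β2, α2β1, α2β2}, which is a line segment. -/
open Set

/-- Product of two real segments is the convex hull of the corner products. -/
lemma real_prod_hull (a1 a2 b1 b2 : ℝ) :
    Set.image2 (· * ·) (segment ℝ a1 a2) (segment ℝ b1 b2) =
      convexHull ℝ ({a1 * b1, a1 * b2, a2 * b1, a2 * b2} : Set ℝ) := by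
  apply Subset.antisymm
  · rintro x ⟨a, ha, b, hb, rfl⟩
    obtain ⟨s, t, hs, ht, hst, rfl⟩ := ha
    obtain ⟨u, v, hu, hv, huv, rfl⟩ := hb
    set C := convexHull ℝ ({a1 * b1, a1 * b2, a2 * b1, a2 * b2} : Set ℝ) with hC
    have hCc : Convex ℝ C := convex_convexHull ℝ _
    have h11 : a1 * b1 ∈ C := subset_convexHull ℝ _ (by simp)
    have h12 : a1 * b2 ∈ C := subset_convexHull ℝ _ (by simp)
    have h21 : a2 * b1 ∈ C := subset_convexHull ℝ _ (by simp)
    have h22 : a2 * b2 ∈ C := subset_convexHull ℝ _ (by simp)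
    have i1 := hCc h11 h12 hu hv huv
    have i2 := hCc h21 h22 hu hv huv
    have o := hCc i1 i2 hs ht hst
    have : (s • a1 + t • a2) * (u • b1 + v • b2) =
        s • (u • (a1 * b1) + v • (a1 * b2)) + t • (u • (a2 * b1) + v • (a2 * b2)) := by
      simp only [smul_eq_mul]; ring
    rw [show ((fun x1 x2 => x1 * x2) (s • a1 + t • a2) (u • b1 + v • b2) : ℝ) = (s • a1 + t • a2) * (u • b1 + v • b2) from rfl, this]
    exact o
  · apply convexHull_min
    · rintro p (rfl | rfl | rfl | rfl)
      · exact mem_image2_of_mem (left_mem_segment ℝ _ _) (left_mem_segment ℝ _ _)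
      · exact mem_image2_of_mem (left_mem_segment ℝ _ _) (right_mem_segment ℝ _ _)
      · exact mem_image2_of_mem (right_mem_segment ℝ _ _) (left_mem_segment ℝ _ _)
      · exact mem_image2_of_mem (right_mem_segment ℝ _ _) (right_mem_segment ℝ _ _)
    · have hconn : IsPreconnected
          (Set.image2 (· * ·) (segment ℝ a1 a2) (segment ℝ b1 b2)) := by
        rw [← Set.image_prod]
        exact ((convex_segment a1 a2).isPreconnected.prod
          (convex_segment b1 b2).isPreconnected).image _
          (continuous_fst.mul continuous_snd).continuousOn
      exact hconn.ordConnected.convex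

/-- The convex hull of four reals is a segment with endpoints among the four. -/
lemma real_hull_segment (r1 r2 r3 r4 : ℝ) :
    ∃ u v : ℝ, u ∈ ({r1, r2, r3, r4} : Set ℝ) ∧ v ∈ ({r1, r2, r3, r4} : Set ℝ) ∧
      convexHull ℝ ({r1, r2, r3, r4} : Set ℝ) = segment ℝ u v := by
  refine ⟨min (min r1 r2) (min r3 r4), max (max r1 r2) (max r3 r4), ?_, ?_, ?_⟩
  · rcases min_choice (min r1 r2) (min r3 r4) with h | h <;> rw [h]
    · rcases min_choice r1 r2 with h' | h' <;> rw [h'] <;> simp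
    · rcases min_choice r3 r4 with h' | h' <;> rw [h'] <;> simp
  · rcases max_choice (max r1 r2) (max r3 r4) with h | h <;> rw [h]
    · rcases max_choice r1 r2 with h' | h' <;> rw [h'] <;> simp
    · rcases max_choice r3 r4 with h' | h' <;> rw [h'] <;> simp
  · have hle : min (min r1 r2) (min r3 r4) ≤ max (max r1 r2) (max r3 r4) :=
      le_trans (min_le_left _ _) (le_trans (min_le_left _ _)
        (le_trans (le_max_left r1 r2) (le_max_left _ _)))
    apply Subset.antisymm
    · apply convexHull_min ?_ (convex_segment _ _)
      rw [segment_eq_Icc hle]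
      rintro p (rfl | rfl | rfl | rfl) <;>
        constructor <;>
        simp [min_le_of_left_le, min_le_of_right_le, le_max_of_le_left, le_max_of_le_right,
          min_le_left, min_le_right, le_max_left, le_max_right]
    · apply segment_subset_convexHull
      · rcases min_choice (min r1 r2) (min r3 r4) with h | h <;> rw [h]
        · rcases min_choice r1 r2 with h' | h' <;> rw [h'] <;> simp
        · rcases min_choice r3 r4 with h' | h' <;> rw [h'] <;> simp
      · rcases max_choice (max r1 r2) (max r3 r4) with h | h <;> rw [h]
        · rcases max_choice r1 r2 with h' | h' <;> rw [h'] <;> simp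
        · rcases max_choice r3 r4 with h' | h' <;> rw [h'] <;> simp

theorem stmt_2 (α1 α2 β1 β2 : ℂ)
    (hA : Collinear ℝ ({0, α1, α2} : Set ℂ))
    (hB : Collinear ℝ ({0, β1, β2} : Set ℂ)) :
    Set.image2 (· * ·) (segment ℝ α1 α2) (segment ℝ β1 β2) =
      convexHull ℝ ({α1 * β1, α1 * β2, α2 * β1, α2 * β2} : Set ℂ) ∧
    ∃ u v : ℂ, convexHull ℝ ({α1 * β1, α1 * β2, α2 * β1, α2 * β2} : Set ℂ) =
      segment ℝ u v := by
  rw [collinear_iff_of_mem (Set.mem_insert 0 _)] at hA hB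
  obtain ⟨c, hc⟩ := hA
  obtain ⟨d, hd⟩ := hB
  obtain ⟨a1, ha1⟩ := hc α1 (by simp)
  obtain ⟨a2, ha2⟩ := hc α2 (by simp)
  obtain ⟨b1, hb1⟩ := hd β1 (by simp)
  obtain ⟨b2, hb2⟩ := hd β2 (by simp)
  simp only [vadd_eq_add, add_zero] at ha1 ha2 hb1 hb2
  subst ha1 ha2 hb1 hb2
  set w : ℂ := c * d with hw
  have hcorners : ({(a1 • c) * (b1 • d), (a1 • c) * (b2 • d), (a2 • c) * (b1 • d),
      (a2 • c) * (b2 • d)} : Set ℂ) =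
      (fun t : ℝ => t • w) '' ({a1 * b1, a1 * b2, a2 * b1, a2 * b2} : Set ℝ) := by
    simp only [Set.image_insert_eq, Set.image_singleton, smul_mul_smul_comm, hw]
  have fseg : ∀ (e : ℂ) (x y : ℝ),
      (fun t : ℝ => t • e) '' segment ℝ x y = segment ℝ (x • e) (y • e) := by
    intro e x y
    exact image_segment ℝ ((LinearMap.toSpanSingleton ℝ ℂ e).toAffineMap) x y
  have hseg1 : segment ℝ (a1 • c) (a2 • c) = (fun t : ℝ => t • c) '' segment ℝ a1 a2 :=
    (fseg c a1 a2).symm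
  have hseg2 : segment ℝ (b1 • d) (b2 • d) = (fun t : ℝ => t • d) '' segment ℝ b1 b2 :=
    (fseg d b1 b2).symm
  have himg : Set.image2 (· * ·) (segment ℝ (a1 • c) (a2 • c)) (segment ℝ (b1 • d) (b2 • d)) =
      (fun t : ℝ => t • w) '' Set.image2 (· * ·) (segment ℝ a1 a2) (segment ℝ b1 b2) := by
    rw [hseg1, hseg2, Set.image2_image_left, Set.image2_image_right, Set.image_image2]
    exact Set.image2_congr' fun a b => smul_mul_smul_comm a c b d
  have hhull : convexHull ℝ ({(a1 • c) * (b1 • d), (a1 • c) * (b2 • d), (a2 • c) * (b1 • d),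
      (a2 • c) * (b2 • d)} : Set ℂ) =
      (fun t : ℝ => t • w) '' convexHull ℝ ({a1 * b1, a1 * b2, a2 * b1, a2 * b2} : Set ℝ) := by
    rw [hcorners]
    exact ((LinearMap.toSpanSingleton ℝ ℂ w).image_convexHull _).symm
  constructor
  · rw [himg, hhull, real_prod_hull]
  · obtain ⟨u, v, _, _, huv⟩ := real_hull_segment (a1 * b1) (a1 * b2) (a2 * b1) (a2 * b2)
    refine ⟨u • w, v • w, ?_⟩
    rw [hhull, huv, fseg]
end

section
/- For any α ∈ ℂ and β1, β2 ∈ ℂ, the Minkowski product of the segment K(0,α) and the segment K(β1,β2) equals the convex hull K(0, αβ1, αβ2). -/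
open Set

section SegmentMul

variable {𝕜 R : Type*} [Field 𝕜] [LinearOrder 𝕜] [IsStrictOrderedRing 𝕜]
  [NonUnitalNonAssocRing R] [Module 𝕜 R]

theorem image_mul_left_segment [SMulCommClass 𝕜 R R] (a b c : R) :
    (a * ·) '' segment 𝕜 b c = segment 𝕜 (a * b) (a * c) :=
  image_segment 𝕜 (LinearMap.mulLeft 𝕜 a).toAffineMap b c

theorem image_mul_right_segment [IsScalarTower 𝕜 R R] (a b c : R) :
    (· * c) '' segment 𝕜 a b = segment 𝕜 (a * c) (b * c) :=
  image_segment 𝕜 (LinearMap.mulRight 𝕜 c).toAffineMap a b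

theorem image2_mul_segment_zero_left [IsScalarTower 𝕜 R R] (a : R) (s : Set R) :
    image2 (· * ·) (segment 𝕜 0 a) s = convexJoin 𝕜 {0} ((a * ·) '' s) := by
  rw [← iUnion_image_right, convexJoin_singleton_left, biUnion_image]
  simp_rw [image_mul_right_segment, zero_mul]

theorem image2_mul_segment_zero_segment [IsScalarTower 𝕜 R R] [SMulCommClass 𝕜 R R]
    (a b c : R) :
    image2 (· * ·) (segment 𝕜 0 a) (segment 𝕜 b c) = convexHull 𝕜 {0, a * b, a * c} := by
  rw [image2_mul_segment_zero_left, image_mul_left_segment,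
    convexHull_insert (insert_nonempty _ _), convexHull_pair]

end SegmentMul

theorem stmt_3 (α β1 β2 : ℂ) :
    Set.image2 (· * ·) (segment ℝ 0 α) (segment ℝ β1 β2) =
      convexHull ℝ ({0, α * β1, α * β2} : Set ℂ) :=
  image2_mul_segment_zero_segment α β1 β2
end

section
/- Let α1, α2 ∈ ℂ be nonzero with α2 = kα1 for some real k > 0 (so 0 ∉ K(α1,α2) and 0, α1, α2 collinear). Then for any β1, β2 ∈ ℂ, the Minkowski product K(α1,α2)K(β1,β2) equals the convex hull K(α1β1, α1β2, α2β1, α2β2). -/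
/-! Multiplication is ℝ-bilinear, so each product `a * b` lies on the segment from `α1 * b` to
`α2 * b`, whose endpoints lie on edges of the quadrilateral; this gives `⊆`. Conversely, since
`α2 = k α1` with `k > 0`, the product set is `[1, k] • [α1 β1, α1 β2]`, and scaling a convex set by
a convex set of positive scalars yields a convex set, which then contains the hull of the four
corners. -/

open Set Pointwise

section

variable {𝕜 E F G : Type*} [Field 𝕜] [LinearOrder 𝕜] [IsStrictOrderedRing 𝕜]
  [AddCommGroup E] [Module 𝕜 E] [AddCommGroup F] [Module 𝕜 F] [AddCommGroup G] [Module 𝕜 G]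

theorem LinearMap.map_mem_segment (f : E →ₗ[𝕜] F) {x a b : E} (h : x ∈ segment 𝕜 a b) :
    f x ∈ segment 𝕜 (f a) (f b) :=
  image_segment 𝕜 f.toAffineMap a b ▸ mem_image_of_mem _ h

theorem LinearMap.image2_segment_subset_convexHull (f : E →ₗ[𝕜] F →ₗ[𝕜] G) (a a' : E)
    (b b' : F) :
    image2 (fun x y ↦ f x y) (segment 𝕜 a a') (segment 𝕜 b b') ⊆
      convexHull 𝕜 {f a b, f a b', f a' b, f a' b'} := by
  rintro _ ⟨x, hx, y, hy, rfl⟩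
  have hay : f a y ∈ convexHull 𝕜 {f a b, f a b', f a' b, f a' b'} :=
    segment_subset_convexHull (by simp) (by simp) ((f a).map_mem_segment hy)
  have ha'y : f a' y ∈ convexHull 𝕜 {f a b, f a b', f a' b, f a' b'} :=
    segment_subset_convexHull (by simp) (by simp) ((f a').map_mem_segment hy)
  exact (convex_convexHull 𝕜 _).segment_subset hay ha'y ((f.flip y).map_mem_segment hx)

theorem LinearMap.image2_segment_smul_left (f : E →ₗ[𝕜] F →ₗ[𝕜] G) (a : E) (k : 𝕜)
    (b b' : F) :
    image2 (fun x y ↦ f x y) (segment 𝕜 a (k • a)) (segment 𝕜 b b') =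
      segment 𝕜 1 k • segment 𝕜 (f a b) (f a b') := by
  have ha : segment 𝕜 a (k • a) = (fun c : 𝕜 ↦ c • a) '' segment 𝕜 1 k := by
    simpa using (image_segment 𝕜 (LinearMap.toSpanSingleton 𝕜 E a).toAffineMap 1 k).symm
  have hb : segment 𝕜 (f a b) (f a b') = f a '' segment 𝕜 b b' :=
    (image_segment 𝕜 (f a).toAffineMap b b').symm
  rw [ha, hb, image2_image_left, ← image2_smul, image2_image_right]
  simp

theorem Convex.smul_of_subset_Ioi {s : Set 𝕜} {t : Set E} (hs : Convex 𝕜 s)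
    (hs0 : s ⊆ Ioi 0) (ht : Convex 𝕜 t) : Convex 𝕜 (s • t) := by
  rintro _ ⟨c₁, hc₁, x₁, hx₁, rfl⟩ _ ⟨c₂, hc₂, x₂, hx₂, rfl⟩ p q hp hq hpq
  have hc₁0 : 0 < c₁ := hs0 hc₁
  have hc₂0 : 0 < c₂ := hs0 hc₂
  set c := p * c₁ + q * c₂
  have hc : c ∈ s := hs hc₁ hc₂ hp hq hpq
  have hc0 : 0 < c := hs0 hc
  -- `p • c₁ • x₁ + q • c₂ • x₂` is `c` times the combination of `x₁, x₂` with weights `p c₁ / c, q c₂ / c`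
  refine ⟨c, hc, (p * c₁ / c) • x₁ + (q * c₂ / c) • x₂,
    ht hx₁ hx₂ (by positivity) (by positivity) (by rw [← add_div, div_self hc0.ne']), ?_⟩
  simp only [smul_add, smul_smul]
  congr 2 <;> field_simp

end

theorem stmt_4_general (α1 α2 β1 β2 : ℂ)
    (k : ℝ) (hk : 0 < k) (hkα : α2 = (k : ℂ) * α1) :
    Set.image2 (· * ·) (segment ℝ α1 α2) (segment ℝ β1 β2) =
      convexHull ℝ ({α1 * β1, α1 * β2, α2 * β1, α2 * β2} : Set ℂ) := by
  have hprod : image2 (· * ·) (segment ℝ α1 α2) (segment ℝ β1 β2) =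
      segment ℝ 1 k • segment ℝ (α1 * β1) (α1 * β2) := by
    rw [hkα, ← Complex.real_smul]
    exact (LinearMap.mul ℝ ℂ).image2_segment_smul_left α1 k β1 β2
  refine Subset.antisymm ((LinearMap.mul ℝ ℂ).image2_segment_subset_convexHull α1 α2 β1 β2)
    (convexHull_min ?_ ?_)
  · simp only [insert_subset_iff, singleton_subset_iff]
    exact ⟨mem_image2_of_mem (left_mem_segment ℝ _ _) (left_mem_segment ℝ _ _),
      mem_image2_of_mem (left_mem_segment ℝ _ _) (right_mem_segment ℝ _ _),
      mem_image2_of_mem (right_mem_segment ℝ _ _) (left_mem_segment ℝ _ _),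
      mem_image2_of_mem (right_mem_segment ℝ _ _) (right_mem_segment ℝ _ _)⟩
  · rw [hprod]
    exact (convex_segment 1 k).smul_of_subset_Ioi
      ((convex_Ioi 0).segment_subset (mem_Ioi.2 one_pos) hk) (convex_segment _ _)

theorem stmt_4 (α1 α2 β1 β2 : ℂ) (hα1 : α1 ≠ 0) (hα2 : α2 ≠ 0)
    (k : ℝ) (hk : 0 < k) (hkα : α2 = (k : ℂ) * α1) :
    Set.image2 (· * ·) (segment ℝ α1 α2) (segment ℝ β1 β2) =
      convexHull ℝ ({α1 * β1, α1 * β2, α2 * β1, α2 * β2} : Set ℂ) :=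
  stmt_4_general α1 α2 β1 β2 k hk hkα
end

section
/- Let a1 < a2 ≤ b1 < b2 be real numbers and set αj = 1 + aj·i, βj = 1 + bj·i for j = 1,2. Then the Minkowski product K(α1,α2)K(β1,β2) equals the convex hull K(α1β1, α1β2, α2β1, α2β2). -/
/-!
Writing `z = (1 - p) + s i`, the point `z` is the product `(1 + a i)(1 + b i)` exactly when `a, b`
are the roots of the monic quadratic `Q_z(x) = x² - s x + p`. For fixed `x` the value `Q_z(x)` is
real-affine in `z`, so the signs of `Q_z(a₁), Q_z(a₂), Q_z(b₁), Q_z(b₂)` at the four vertices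
`αⱼβₖ` (where `Q(x) = (x - aⱼ)(x - bₖ)`) propagate to their convex hull. For `z` in the hull,
`Q_z(a₂) ≤ 0` gives real roots `a ≤ a₂ ≤ b`, and the remaining signs put `a ∈ [a₁, a₂]` and
`b ∈ [b₁, b₂]`. The inclusion of the product set in the hull is bilinearity of multiplication.
-/

open Complex Set

theorem image2_mul_segment_subset_convexHull {𝕜 R : Type*} [Semiring 𝕜] [PartialOrder 𝕜]
    [NonUnitalNonAssocSemiring R] [Module 𝕜 R] [IsScalarTower 𝕜 R R] [SMulCommClass 𝕜 R R]
    (x y u v : R) :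
    image2 (· * ·) (segment 𝕜 x y) (segment 𝕜 u v) ⊆ convexHull 𝕜 {x * u, x * v, y * u, y * v} := by
  rintro _ ⟨_, ⟨p, q, hp, hq, hpq, rfl⟩, _, ⟨r, t, hr, ht, hrt, rfl⟩, rfl⟩
  have hull := convex_convexHull 𝕜 ({x * u, x * v, y * u, y * v} : Set R)
  have vertex {w : R} (hw : w ∈ ({x * u, x * v, y * u, y * v} : Set R)) :=
    subset_convexHull 𝕜 _ hw
  have expand : (p • x + q • y) * (r • u + t • v) =
      p • (r • (x * u) + t • (x * v)) + q • (r • (y * u) + t • (y * v)) := by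
    rw [add_mul, smul_mul_assoc, smul_mul_assoc, mul_add, mul_add, mul_smul_comm, mul_smul_comm,
      mul_smul_comm, mul_smul_comm]
  dsimp only
  rw [expand]
  exact hull (hull (vertex (by simp)) (vertex (by simp)) hr ht hrt)
    (hull (vertex (by simp)) (vertex (by simp)) hr ht hrt) hp hq hpq

def assocQuadratic (z : ℂ) (x : ℝ) : ℝ := x ^ 2 - z.im * x + (1 - z.re)

theorem re_one_add_mul_I_mul (a b : ℝ) : ((1 + a * I) * (1 + b * I)).re = 1 - a * b := by
  simp

theorem im_one_add_mul_I_mul (a b : ℝ) : ((1 + a * I) * (1 + b * I)).im = a + b := by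
  simp [add_comm]

theorem assocQuadratic_mul (a b x : ℝ) :
    assocQuadratic ((1 + a * I) * (1 + b * I)) x = (x - a) * (x - b) := by
  rw [assocQuadratic, re_one_add_mul_I_mul, im_one_add_mul_I_mul]
  ring

theorem assocQuadratic_smul_add_smul (z w : ℂ) {p q : ℝ} (hpq : p + q = 1) (x : ℝ) :
    assocQuadratic (p • z + q • w) x = p * assocQuadratic z x + q * assocQuadratic w x := by
  simp only [assocQuadratic, add_re, add_im, real_smul, re_ofReal_mul, im_ofReal_mul]
  linear_combination (-(x ^ 2 + 1)) * hpq

theorem assocQuadratic_nonpos_of_mem_convexHull {S : Set ℂ} {z : ℂ} (hz : z ∈ convexHull ℝ S)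
    {x : ℝ} (hS : ∀ w ∈ S, assocQuadratic w x ≤ 0) : assocQuadratic z x ≤ 0 := by
  refine convexHull_min hS (fun w hw v hv p q hp hq hpq => ?_) hz
  show assocQuadratic (p • w + q • v) x ≤ 0
  rw [assocQuadratic_smul_add_smul w v hpq]
  exact add_nonpos (mul_nonpos_of_nonneg_of_nonpos hp hw) (mul_nonpos_of_nonneg_of_nonpos hq hv)

theorem assocQuadratic_nonneg_of_mem_convexHull {S : Set ℂ} {z : ℂ} (hz : z ∈ convexHull ℝ S)
    {x : ℝ} (hS : ∀ w ∈ S, 0 ≤ assocQuadratic w x) : 0 ≤ assocQuadratic z x := by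
  refine convexHull_min hS (fun w hw v hv p q hp hq hpq => ?_) hz
  show 0 ≤ assocQuadratic (p • w + q • v) x
  rw [assocQuadratic_smul_add_smul w v hpq]
  exact add_nonneg (mul_nonneg hp hw) (mul_nonneg hq hv)

theorem exists_eq_mul_of_assocQuadratic_nonpos {z : ℂ} {x : ℝ} (hx : assocQuadratic z x ≤ 0) :
    ∃ a b : ℝ, a ≤ b ∧ z = (1 + a * I) * (1 + b * I) := by
  set d := z.im ^ 2 - 4 * (1 - z.re)
  have hd : 0 ≤ d := by
    unfold assocQuadratic at hx
    nlinarith [sq_nonneg (2 * x - z.im)]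
  have hsqrt := Real.sq_sqrt hd
  refine ⟨(z.im - √d) / 2, (z.im + √d) / 2, by linarith [Real.sqrt_nonneg d], ?_⟩
  apply Complex.ext
  · rw [re_one_add_mul_I_mul]
    linear_combination (-1 / 4 : ℝ) * hsqrt
  · rw [im_one_add_mul_I_mul]
    ring

theorem one_add_mul_I_mem_segment {x y t : ℝ} (hx : x ≤ t) (hy : t ≤ y) :
    1 + t * I ∈ segment ℝ (1 + x * I) (1 + y * I) := by
  have line (s : ℝ) : AffineMap.lineMap (1 : ℂ) (1 + I) s = 1 + s * I := by
    simp [AffineMap.lineMap_apply, add_comm]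
  rw [← line, ← line, ← line, ← image_segment, segment_eq_Icc (hx.trans hy)]
  exact mem_image_of_mem _ ⟨hx, hy⟩

theorem mem_Icc_of_sub_mul_sub_nonpos {a b x : ℝ} (hab : a ≤ b) (h : (x - a) * (x - b) ≤ 0) :
    x ∈ Icc a b := by
  constructor <;> nlinarith

theorem le_of_sub_mul_sub_nonneg_of_lt {a b x : ℝ} (hxb : x < b) (h : 0 ≤ (x - a) * (x - b)) :
    x ≤ a := by
  nlinarith

theorem le_of_sub_mul_sub_nonneg_of_lt' {a b x : ℝ} (hax : a < x) (h : 0 ≤ (x - a) * (x - b)) :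
    b ≤ x := by
  nlinarith

theorem stmt_5 (a1 a2 b1 b2 : ℝ) (h1 : a1 < a2) (h2 : a2 ≤ b1) (h3 : b1 < b2) :
    Set.image2 (· * ·)
        (segment ℝ (1 + a1 * Complex.I) (1 + a2 * Complex.I))
        (segment ℝ (1 + b1 * Complex.I) (1 + b2 * Complex.I)) =
      convexHull ℝ
        ({(1 + a1 * Complex.I) * (1 + b1 * Complex.I),
          (1 + a1 * Complex.I) * (1 + b2 * Complex.I),
          (1 + a2 * Complex.I) * (1 + b1 * Complex.I),
          (1 + a2 * Complex.I) * (1 + b2 * Complex.I)} : Set ℂ) := by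
  refine (image2_mul_segment_subset_convexHull _ _ _ _).antisymm fun z hz => ?_
  have signs : 0 ≤ assocQuadratic z a1 ∧ assocQuadratic z a2 ≤ 0 ∧
      assocQuadratic z b1 ≤ 0 ∧ 0 ≤ assocQuadratic z b2 := by
    refine ⟨assocQuadratic_nonneg_of_mem_convexHull hz ?_,
      assocQuadratic_nonpos_of_mem_convexHull hz ?_, assocQuadratic_nonpos_of_mem_convexHull hz ?_,
      assocQuadratic_nonneg_of_mem_convexHull hz ?_⟩ <;>
    simp only [forall_mem_insert, mem_singleton_iff, forall_eq, assocQuadratic_mul] <;>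
    refine ⟨?_, ?_, ?_, ?_⟩ <;> nlinarith
  obtain ⟨a, b, hab, rfl⟩ := exists_eq_mul_of_assocQuadratic_nonpos signs.2.1
  simp only [assocQuadratic_mul] at signs
  obtain ⟨ha1, ha2, hb1, hb2⟩ := signs
  obtain ⟨ha_a2, ha2_b⟩ := mem_Icc_of_sub_mul_sub_nonpos hab ha2
  obtain ⟨-, hb1_b⟩ := mem_Icc_of_sub_mul_sub_nonpos hab hb1
  have ha1_a := le_of_sub_mul_sub_nonneg_of_lt (h1.trans_le ha2_b) ha1
  have hb_b2 := le_of_sub_mul_sub_nonneg_of_lt' ((ha_a2.trans h2).trans_lt h3) hb2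
  exact mem_image2_of_mem (one_add_mul_I_mem_segment ha1_a ha_a2)
    (one_add_mul_I_mem_segment hb1_b hb_b2)
end

section
/- Let K1 = K(α1,…,αn) and K2 = K(β1,…,βm) be convex polygons (convex hulls of finite point sets) in ℂ. Then the Minkowski product K1K2 is star-shaped if and only if there exists p ∈ K1K2 such that the segment K(p, αiβj) is contained in K1K2 for all 1 ≤ i ≤ n and 1 ≤ j ≤ m. -/
/-!
If `0` lies in `K₁` or `K₂`, the product `K₁K₂` is star-shaped about `0`. Otherwise `K₁` and `K₂`
lie in open half-planes `Re (a / w₁) > 0` and `Re (b / w₂) > 0`, so `K₁K₂` meets the line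
`ℝ w₁w₂` only on the open ray through `w₁w₂`. Moreover `K₁K₂` meets every open ray from `0` in a
convex set: if `a₁b₁` and `a₂b₂` lie on the same ray, a suitable path in
`[a₁, a₂] × [b₁, b₂]` keeps the product on that ray, and the intermediate value theorem does the
rest.

These two properties imply that if all segments between points of a set `s` lie in `K₁K₂`, then so
does the convex hull of `s`: a point `w` of the hull is a convex combination of points of those
segments lying on the line `ℝ w`, all on the same side of `0` as `w`, since `0` is not in the hull.
Applying this first to `p` and the points `αᵢβⱼ` (`i` fixed), then to `p` and the points `αᵢb`,
shows that `K₁K₂` contains every segment from `p` to a point `ab`.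
-/

open Set
open scoped Pointwise

theorem Finset.sum_sum_smul_sub_smul {ι M : Type*} [AddCommGroup M] [Module ℝ M]
    (P N : Finset ι) (c f : ι → ℝ) (g : ι → M) :
    ∑ i ∈ P, ∑ j ∈ N, (c i * c j) • (f i • g j - f j • g i) =
      (∑ i ∈ P, c i * f i) • ∑ j ∈ N, c j • g j - (∑ j ∈ N, c j * f j) • ∑ i ∈ P, c i • g i := by
  simp only [smul_sub, Finset.sum_sub_distrib, Finset.smul_sum, smul_smul, Finset.sum_mul,
    Finset.sum_smul]
  rw [Finset.sum_comm (s := P)]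
  congr 1 <;> refine Finset.sum_congr rfl fun _ _ => Finset.sum_congr rfl fun _ _ => ?_ <;> ring_nf

theorem sum_smul_mem_convexHull_of_ne_zero {E ι : Type*} [AddCommGroup E] [Module ℝ E]
    [Fintype ι] {t : Set E} {c : ι → ℝ} {z : ι → E} (hc₀ : ∀ i, 0 ≤ c i) (hc₁ : ∑ i, c i = 1)
    (hz : ∀ i, c i ≠ 0 → z i ∈ t) : ∑ i, c i • z i ∈ convexHull ℝ t := by
  classical
  rw [← Finset.centerMass_eq_of_sum_1 _ _ hc₁, ← Finset.centerMass_filter_ne_zero]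
  refine Finset.centerMass_mem_convexHull _ (fun i _ => hc₀ i) ?_
    fun i hi => hz i (Finset.mem_filter.1 hi).2
  rw [Finset.sum_filter_ne_zero, hc₁]
  exact one_pos

section KernelOfFunctional

variable {E : Type*} [AddCommGroup E] [Module ℝ E] (F : E →ₗ[ℝ] ℝ)

theorem exists_mem_segment_inter_ker_smul_eq {x y : E} (hx : 0 ≤ F x) (hy : F y < 0) :
    ∃ v ∈ segment ℝ x y ∩ LinearMap.ker F, (F x - F y) • v = F x • y - F y • x := by
  have hxy : F x - F y ≠ 0 := by linarith
  refine ⟨AffineMap.lineMap x y (F x / (F x - F y)), ⟨lineMap_mem_segment ℝ x y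
    ⟨div_nonneg hx (by linarith), (div_le_one (by linarith)).2 (by linarith)⟩, ?_⟩, ?_⟩
  · simp only [SetLike.mem_coe, LinearMap.mem_ker, AffineMap.lineMap_apply_module', map_add,
      map_smul, map_sub, smul_eq_mul]
    field_simp
    ring
  · rw [AffineMap.lineMap_apply_module', smul_add, smul_smul, mul_div_cancel₀ _ hxy]
    module

open Finset in
theorem convexHull_inter_ker_subset (s : Set E) :
    convexHull ℝ s ∩ LinearMap.ker F ⊆
      convexHull ℝ (⋃ x ∈ s, ⋃ y ∈ s, segment ℝ x y ∩ LinearMap.ker F) := by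
  classical
  rintro _ ⟨hq, hFq⟩
  obtain ⟨ι, _, c, z, hc₀, hc₁, hz, rfl⟩ := mem_convexHull_iff_exists_fintype.1 hq
  have hsum : ∑ i, c i * F (z i) = 0 := by simpa using hFq
  set P := univ.filter fun i => 0 ≤ F (z i)
  set N := univ.filter fun i => ¬0 ≤ F (z i)
  set A := ∑ i ∈ P, c i * F (z i)
  have hNA : ∑ j ∈ N, c j * F (z j) = -A := by
    rw [← sum_filter_add_sum_filter_not univ fun i => 0 ≤ F (z i)] at hsum
    linarith
  have hA : 0 ≤ A := sum_nonneg fun i hi => mul_nonneg (hc₀ i) (mem_filter.1 hi).2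
  rcases hA.eq_or_lt with hA | hA
  · have hP0 := (sum_eq_zero_iff_of_nonneg fun i hi =>
      mul_nonneg (hc₀ i) (mem_filter.1 hi).2).1 hA.symm
    have hN0 := (sum_eq_zero_iff_of_nonpos fun i hi =>
      mul_nonpos_of_nonneg_of_nonpos (hc₀ i) (not_le.1 (mem_filter.1 hi).2).le).1
        (by rw [hNA, ← hA, neg_zero])
    refine sum_smul_mem_convexHull_of_ne_zero hc₀ hc₁ fun i hci =>
      mem_biUnion (hz i) <| mem_biUnion (hz i) ⟨left_mem_segment ℝ _ _, ?_⟩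
    by_cases h : 0 ≤ F (z i)
    · exact (mul_eq_zero.1 (hP0 i (mem_filter.2 ⟨mem_univ i, h⟩))).resolve_left hci
    · exact (mul_eq_zero.1 (hN0 i (mem_filter.2 ⟨mem_univ i, h⟩))).resolve_left hci
  -- pair each `z i` with `F ≥ 0` with each `z j` with `F < 0`: the sum is the center of mass of
  -- the zeros of `F` on the segments `[z i, z j]`, with weights `c i c j (F (z i) - F (z j))`
  have hgap : ∀ e ∈ P ×ˢ N, 0 ≤ F (z e.1) ∧ F (z e.2) < 0 := by
    intro e he
    simp only [P, N, mem_product, mem_filter] at he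
    exact ⟨he.1.2, not_le.1 he.2.2⟩
  choose! y hy_mem hy_eq using fun e he =>
    exists_mem_segment_inter_ker_smul_eq F (hgap e he).1 (hgap e he).2
  set w : ι × ι → ℝ := fun e => c e.1 * c e.2 * (F (z e.1) - F (z e.2))
  have hw : ∑ e ∈ P ×ˢ N, w e = A := by
    have := sum_sum_smul_sub_smul P N c (fun i => F (z i)) fun _ => (1 : ℝ)
    simp only [smul_eq_mul, mul_one] at this
    rw [sum_product]
    simp only [w]
    rw [this, hNA]
    linear_combination A * ((sum_filter_add_sum_filter_not _ _ _).trans hc₁ :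
      ∑ i ∈ P, c i + ∑ i ∈ N, c i = 1)
  have hwy : ∑ e ∈ P ×ˢ N, w e • y e = A • ∑ i, c i • z i := by
    rw [sum_congr rfl fun e he => (mul_smul _ _ (y e)).trans (congrArg _ (hy_eq e he)),
      sum_product]
    dsimp only
    rw [sum_sum_smul_sub_smul, hNA, neg_smul, sub_neg_eq_add, ← smul_add, add_comm,
      sum_filter_add_sum_filter_not]
  have : ∑ i, c i • z i = (P ×ˢ N).centerMass w y := by
    rw [centerMass, hw, hwy, inv_smul_smul₀ hA.ne']
  rw [this]
  refine centerMass_mem_convexHull _ (fun e he => ?_) (hw ▸ hA) fun e he => ?_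
  · exact mul_nonneg (mul_nonneg (hc₀ _) (hc₀ _)) (by linarith [hgap e he])
  · exact mem_biUnion (hz _) <| mem_biUnion (hz _) (hy_mem e he)

end KernelOfFunctional

namespace Complex

theorem exists_pos_im_eq_neg_mul_im_of_mul_eq_ofReal {X Y : ℂ} {c : ℝ}
    (hXY : X * Y = c) (hc : 0 < c) : ∃ κ > 0, Y.im = -κ * X.im := by
  have hX : 0 < normSq X := normSq_pos.2 <| left_ne_zero_of_mul <| hXY ▸ ofReal_ne_zero.2 hc.ne'
  refine ⟨c / normSq X, div_pos hc hX, ?_⟩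
  have hre := congrArg re hXY
  have him := congrArg im hXY
  simp only [mul_re, mul_im, ofReal_re, ofReal_im] at hre him
  rw [neg_mul, div_mul_eq_mul_div, ← neg_div, eq_div_iff hX.ne', normSq_apply]
  linear_combination X.re * him - X.im * hre

theorem re_mul_pos_of_im_mul_eq_zero {u v : ℂ} (hu : 0 < u.re) (hv : 0 < v.re)
    (huv : (u * v).im = 0) : 0 < (u * v).re := by
  rw [mul_im] at huv
  rw [mul_re]
  have h : u.re * (u.re * v.re - u.im * v.im) = v.re * (u.re ^ 2 + u.im ^ 2) := by
    linear_combination -u.im * huv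
  nlinarith [mul_pos hv (by positivity : (0 : ℝ) < u.re ^ 2 + u.im ^ 2)]

theorem segment_subset_iff_forall_mem {p z : ℂ} {S : Set ℂ} :
    segment ℝ p z ⊆ S ↔ ∀ t ∈ Icc (0 : ℝ) 1, (1 - t : ℂ) * p + t * z ∈ S := by
  rw [segment_eq_image, image_subset_iff]
  simp [real_smul, subset_def]

theorem mem_convexHull_segment_inter_im_div_eq_zero (w : ℂ) {s : Set ℂ} {q : ℂ}
    (hq : q ∈ convexHull ℝ s) (hqw : (q / w).im = 0) :
    q ∈ convexHull ℝ (⋃ x ∈ s, ⋃ y ∈ s, segment ℝ x y ∩ {z | (z / w).im = 0}) :=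
  convexHull_inter_ker_subset (imLm ∘ₗ LinearMap.mulRight ℝ w⁻¹) s ⟨hq, hqw⟩

end Complex

theorem exists_continuousOn_mul_one_sub_eq_mul {κ : ℝ} (hκ : 0 < κ) :
    ∃ u : ℝ → ℝ, ContinuousOn u (Icc 0 1) ∧ u 0 = 0 ∧ u 1 = 1 ∧
      ∀ s ∈ Icc (0 : ℝ) 1, u s ∈ Icc (0 : ℝ) 1 ∧ s * (1 - u s) = κ * (1 - s) * u s := by
  have hden : ∀ s ∈ Icc (0 : ℝ) 1, 0 < s + κ * (1 - s) := by
    rintro s ⟨hs₀, hs₁⟩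
    rcases hs₀.eq_or_lt with rfl | hs₀
    · simpa using hκ
    · nlinarith
  refine ⟨fun s => s / (s + κ * (1 - s)),
    continuousOn_id.div (by fun_prop) fun s hs => (hden s hs).ne', by simp, by simp, ?_⟩
  intro s hs
  have := hden s hs
  refine ⟨⟨div_nonneg hs.1 this.le, (div_le_one this).2 (by nlinarith [hs.2])⟩, ?_⟩
  field_simp
  ring

theorem Convex.ordConnected_setOf_smul_mem_mul {K₁ K₂ : Set ℂ} (h₁ : Convex ℝ K₁)
    (h₂ : Convex ℝ K₂) (z : ℂ) : OrdConnected {r : ℝ | 0 < r ∧ r • z ∈ K₁ * K₂} := by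
  refine ⟨?_⟩
  rintro r₁ ⟨hr₁, a₁, ha₁, b₁, hb₁, hab₁⟩ r₂ ⟨hr₂, a₂, ha₂, b₂, hb₂, hab₂⟩ ρ ⟨hρ₁, hρ₂⟩
  refine ⟨hr₁.trans_le hρ₁, ?_⟩
  simp only [Complex.real_smul] at hab₁ hab₂ ⊢
  rcases eq_or_ne z 0 with rfl | hz
  · exact ⟨a₁, ha₁, b₁, hb₁, by simpa using hab₁⟩
  set X := a₂ * b₁ / z
  set Y := a₁ * b₂ / z
  have hXY : X * Y = ((r₁ * r₂ : ℝ) : ℂ) := by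
    calc X * Y = a₁ * b₁ * (a₂ * b₂) / (z * z) := by ring
      _ = _ := by rw [hab₁, hab₂]; push_cast; field_simp
  obtain ⟨κ, hκ, hYX⟩ :=
    Complex.exists_pos_im_eq_neg_mul_im_of_mul_eq_ofReal hXY (mul_pos hr₁ hr₂)
  obtain ⟨u, hu_cont, hu₀, hu₁, hu⟩ := exists_continuousOn_mul_one_sub_eq_mul hκ
  -- along `s ↦ (s, u s)` the product of the two segments stays on the line `ℝ z`
  set g : ℝ → ℂ := fun s => ((1 - s) * (1 - u s) * r₁ + s * u s * r₂ : ℝ) +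
    (s * (1 - u s) : ℝ) * X + ((1 - s) * u s : ℝ) * Y
  have hg : ∀ s, ((1 - s) • a₁ + s • a₂) * ((1 - u s) • b₁ + u s • b₂) = g s * z := by
    intro s
    have hX : X * z = a₂ * b₁ := div_mul_cancel₀ _ hz
    have hY : Y * z = a₁ * b₂ := div_mul_cancel₀ _ hz
    simp only [g, Complex.real_smul]
    push_cast
    linear_combination ((1 - s) * (1 - u s) : ℂ) * hab₁ + (s * u s : ℂ) * hab₂ -
      (s * (1 - u s) : ℂ) * hX - ((1 - s) * u s : ℂ) * hY
  have hg_im : ∀ s ∈ Icc (0 : ℝ) 1, (g s).im = 0 := by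
    intro s hs
    simp only [g, Complex.add_im, Complex.ofReal_im, Complex.im_ofReal_mul, hYX]
    linear_combination X.im * (hu s hs).2
  have hg_cont : ContinuousOn (fun s => (g s).re) (Icc 0 1) := by
    simp only [g, Complex.add_re, Complex.ofReal_re, Complex.re_ofReal_mul]
    fun_prop
  obtain ⟨s, hs, hgs⟩ := intermediate_value_Icc zero_le_one hg_cont
    (by simp only [g, hu₀, hu₁]; simpa using ⟨hρ₁, hρ₂⟩)
  refine ⟨(1 - s) • a₁ + s • a₂, h₁ ha₁ ha₂ (by linarith [hs.2]) hs.1 (by ring),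
    (1 - u s) • b₁ + u s • b₂, h₂ hb₁ hb₂ (by linarith [(hu s hs).1.2]) (hu s hs).1.1 (by ring), ?_⟩
  show _ * _ = _
  rw [hg, ← hgs]
  congr 1
  exact Complex.ext rfl (hg_im s hs)

theorem Convex.exists_forall_re_div_pos {K : Set ℂ} (hK : Convex ℝ K) (hK_closed : IsClosed K)
    (h0 : (0 : ℂ) ∉ K) : ∃ w : ℂ, ∀ a ∈ K, 0 < (a / w).re := by
  obtain ⟨f, u, hfK, hu⟩ := geometric_hahn_banach_closed_point hK hK_closed h0
  refine ⟨(-(f 1 : ℂ) + f Complex.I * Complex.I)⁻¹, fun a ha => ?_⟩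
  have hfa : f a = a.re * f 1 + a.im * f Complex.I := by
    conv_lhs => rw [← Complex.re_add_im a, ← mul_one (a.re : ℂ), ← Complex.real_smul,
      ← Complex.real_smul, map_add, map_smul, map_smul, smul_eq_mul, smul_eq_mul]
  rw [div_inv_eq_mul]
  simp only [Complex.mul_re, Complex.mul_im, Complex.add_re, Complex.add_im, Complex.neg_re,
    Complex.neg_im, Complex.ofReal_re, Complex.ofReal_im, Complex.I_re, Complex.I_im]
  linarith [hfK a ha, map_zero f ▸ hu]

section SegmentFilling

variable {S s : Set ℂ} {W : ℂ}

theorem zero_notMem_convexHull_of_segment_subset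
    (hline : ∀ z ∈ S, (z / W).im = 0 → 0 < (z / W).re)
    (hseg : ∀ x ∈ s, ∀ y ∈ s, segment ℝ x y ⊆ S) : (0 : ℂ) ∉ convexHull ℝ s := by
  intro h0
  have hH : Convex ℝ {z : ℂ | 0 < (z / W).re} :=
    (convex_halfSpace_re_gt 0).linear_preimage (LinearMap.mulRight ℝ W⁻¹)
  have hZ : (⋃ x ∈ s, ⋃ y ∈ s, segment ℝ x y ∩ {z | (z / W).im = 0}) ⊆ {z | 0 < (z / W).re} := by
    simp only [iUnion_subset_iff]
    exact fun x hx y hy z ⟨hz, hzW⟩ => hline z (hseg x hx y hy hz) hzW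
  simpa using convexHull_min hZ hH
    (Complex.mem_convexHull_segment_inter_im_div_eq_zero W h0 (by simp))

theorem convexHull_subset_of_segment_subset
    (hray : ∀ z, OrdConnected {r : ℝ | 0 < r ∧ r • z ∈ S})
    (hline : ∀ z ∈ S, (z / W).im = 0 → 0 < (z / W).re)
    (hseg : ∀ x ∈ s, ∀ y ∈ s, segment ℝ x y ⊆ S) : convexHull ℝ s ⊆ S := by
  intro w hw
  have h0 := zero_notMem_convexHull_of_segment_subset hline hseg
  have hw0 : w ≠ 0 := by rintro rfl; exact h0 hw
  set R := {r : ℝ | 0 < r ∧ r • w ∈ S}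
  have hR : Convex ℝ ((· • w) '' R) :=
    (hray w).convex.linear_image (LinearMap.toSpanSingleton ℝ ℂ w)
  have hZ : (⋃ x ∈ s, ⋃ y ∈ s, segment ℝ x y ∩ {z | (z / w).im = 0}) ⊆ (· • w) '' R := by
    simp only [iUnion_subset_iff]
    rintro x hx y hy z ⟨hz, hzw⟩
    have hz_eq : (z / w).re • w = z := by
      conv_rhs => rw [← div_mul_cancel₀ z hw0, ← Complex.re_add_im (z / w), hzw]
      simp [Complex.real_smul]
    refine ⟨(z / w).re, ⟨?_, by rw [hz_eq]; exact hseg x hx y hy hz⟩, hz_eq⟩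
    -- otherwise `0` lies on the segment from `z` to `w`, inside the convex hull of `s`
    by_contra! hr
    refine h0 <| (convex_convexHull ℝ s).segment_subset ((convex_convexHull ℝ s).segment_subset
      (subset_convexHull ℝ s hx) (subset_convexHull ℝ s hy) hz) hw ?_
    rw [← hz_eq]
    set r := (z / w).re
    have hr₁ : 0 < 1 - r := by linarith
    refine ⟨1 / (1 - r), -r / (1 - r), by positivity, div_nonneg (by linarith) hr₁.le,
      by field_simp; ring, ?_⟩
    rw [smul_smul, ← add_smul]
    field_simp
    simp
  obtain ⟨r, ⟨-, hr⟩, hrw⟩ := convexHull_min hZ hR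
    (Complex.mem_convexHull_segment_inter_im_div_eq_zero w hw (by simp [div_self hw0]))
  exact hrw ▸ hr

theorem segment_subset_of_mem_convexHull
    (hray : ∀ z, OrdConnected {r : ℝ | 0 < r ∧ r • z ∈ S})
    (hline : ∀ z ∈ S, (z / W).im = 0 → 0 < (z / W).re) {p x : ℂ} (hp : p ∈ S)
    (hps : ∀ y ∈ s, segment ℝ p y ⊆ S) (hs : ∀ y ∈ s, ∀ y' ∈ s, segment ℝ y y' ⊆ S)
    (hx : x ∈ convexHull ℝ s) : segment ℝ p x ⊆ S := by
  refine ((convex_convexHull ℝ _).segment_subset (subset_convexHull ℝ _ (mem_insert p s))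
    (convexHull_mono (subset_insert p s) hx)).trans
    (convexHull_subset_of_segment_subset hray hline ?_)
  rintro y (rfl | hy) y' (rfl | hy')
  · simpa using hp
  · exact hps y' hy'
  · exact segment_symm ℝ y y' ▸ hps y hy
  · exact hs y hy y' hy'

end SegmentFilling

theorem StarConvex.mul_right_of_zero {K₁ : Set ℂ} (h : StarConvex ℝ 0 K₁) (K₂ : Set ℂ) :
    StarConvex ℝ 0 (K₁ * K₂) := by
  rw [starConvex_zero_iff]
  rintro _ ⟨a, ha, b, hb, rfl⟩ t ht₀ ht₁
  exact ⟨t • a, h.smul_mem ha ht₀ ht₁, b, hb, smul_mul_assoc t a b⟩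

theorem Convex.starConvex_zero_mul {K₁ K₂ : Set ℂ} (h₁ : Convex ℝ K₁) (h₂ : Convex ℝ K₂)
    (h0 : (0 : ℂ) ∈ K₁ ∨ (0 : ℂ) ∈ K₂) : StarConvex ℝ 0 (K₁ * K₂) := by
  rcases h0 with h | h
  · exact (h₁.starConvex h).mul_right_of_zero K₂
  · exact mul_comm K₂ K₁ ▸ (h₂.starConvex h).mul_right_of_zero K₁

theorem segment_subset_mul_convexHull {A B : Set ℂ} {w₁ w₂ p : ℂ}
    (hA : ∀ a ∈ convexHull ℝ A, 0 < (a / w₁).re) (hB : ∀ b ∈ convexHull ℝ B, 0 < (b / w₂).re)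
    (hp : p ∈ convexHull ℝ A * convexHull ℝ B)
    (hvert : ∀ a ∈ A, ∀ b ∈ B, segment ℝ p (a * b) ⊆ convexHull ℝ A * convexHull ℝ B) :
    ∀ z ∈ convexHull ℝ A * convexHull ℝ B, segment ℝ p z ⊆ convexHull ℝ A * convexHull ℝ B := by
  have hconvA := convex_convexHull ℝ A
  have hconvB := convex_convexHull ℝ B
  have hray := hconvA.ordConnected_setOf_smul_mem_mul hconvB
  have hline : ∀ z ∈ convexHull ℝ A * convexHull ℝ B,
      (z / (w₁ * w₂)).im = 0 → 0 < (z / (w₁ * w₂)).re := by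
    rintro _ ⟨a, ha, b, hb, rfl⟩
    rw [mul_div_mul_comm]
    exact Complex.re_mul_pos_of_im_mul_eq_zero (hA a ha) (hB b hb)
  have hleft : ∀ a ∈ A, ∀ b ∈ convexHull ℝ B,
      segment ℝ p (a * b) ⊆ convexHull ℝ A * convexHull ℝ B := by
    intro a ha b hb
    refine segment_subset_of_mem_convexHull hray hline hp (s := (a * ·) '' B) ?_ ?_ ?_
    · rintro _ ⟨b', hb', rfl⟩
      exact hvert a ha b' hb'
    · rintro _ ⟨b₁, hb₁, rfl⟩ _ ⟨b₂, hb₂, rfl⟩ _ ⟨θ₁, θ₂, hθ₁, hθ₂, hθ, rfl⟩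
      refine ⟨a, subset_convexHull ℝ A ha, θ₁ • b₁ + θ₂ • b₂, hconvB (subset_convexHull ℝ B hb₁)
        (subset_convexHull ℝ B hb₂) hθ₁ hθ₂ hθ, ?_⟩
      simp only [mul_add, mul_smul_comm]
    · rw [show (a * ·) = ⇑(LinearMap.mulLeft ℝ a) from rfl, ← LinearMap.image_convexHull]
      exact mem_image_of_mem _ hb
  rintro _ ⟨a, ha, b, hb, rfl⟩
  refine segment_subset_of_mem_convexHull hray hline hp (s := (· * b) '' A) ?_ ?_ ?_
  · rintro _ ⟨a', ha', rfl⟩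
    exact hleft a' ha' b hb
  · rintro _ ⟨a₁, ha₁, rfl⟩ _ ⟨a₂, ha₂, rfl⟩ _ ⟨θ₁, θ₂, hθ₁, hθ₂, hθ, rfl⟩
    refine ⟨θ₁ • a₁ + θ₂ • a₂, hconvA (subset_convexHull ℝ A ha₁) (subset_convexHull ℝ A ha₂)
      hθ₁ hθ₂ hθ, b, hb, ?_⟩
    simp only [add_mul, smul_mul_assoc]
  · rw [show (· * b) = ⇑(LinearMap.mulRight ℝ b) from rfl, ← LinearMap.image_convexHull]
    exact mem_image_of_mem _ ha

theorem stmt_9 (n m : ℕ) (α : Fin n → ℂ) (β : Fin m → ℂ)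
    (K1 K2 : Set ℂ) (hK1 : K1 = convexHull ℝ (Set.range α))
    (hK2 : K2 = convexHull ℝ (Set.range β)) :
    (∃ p ∈ Set.image2 (· * ·) K1 K2, ∀ z ∈ Set.image2 (· * ·) K1 K2,
        ∀ t ∈ Set.Icc (0:ℝ) 1, ((1 - t) : ℂ) * p + (t : ℂ) * z ∈ Set.image2 (· * ·) K1 K2) ↔
      (∃ p ∈ Set.image2 (· * ·) K1 K2, ∀ i : Fin n, ∀ j : Fin m,
        segment ℝ p (α i * β j) ⊆ Set.image2 (· * ·) K1 K2) := by
  subst hK1 hK2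
  simp only [image2_mul, ← Complex.segment_subset_iff_forall_mem]
  have hconv₁ := convex_convexHull ℝ (range α)
  have hconv₂ := convex_convexHull ℝ (range β)
  refine ⟨fun ⟨p, hp, hpS⟩ => ⟨p, hp, fun i j => hpS _ (mul_mem_mul
    (subset_convexHull ℝ _ (mem_range_self i)) (subset_convexHull ℝ _ (mem_range_self j)))⟩,
    fun ⟨p, hp, hvert⟩ => ?_⟩
  by_cases h0 : (0 : ℂ) ∈ convexHull ℝ (range α) ∨ (0 : ℂ) ∈ convexHull ℝ (range β)
  · obtain ⟨a, ha, b, hb, -⟩ := hp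
    exact ⟨0, h0.elim (⟨0, ·, b, hb, zero_mul b⟩) (⟨a, ha, 0, ·, mul_zero a⟩),
      fun z hz => (hconv₁.starConvex_zero_mul hconv₂ h0).segment_subset hz⟩
  obtain ⟨hα, hβ⟩ := not_or.1 h0
  obtain ⟨w₁, hw₁⟩ := hconv₁.exists_forall_re_div_pos
    ((finite_range α).isCompact_convexHull (𝕜 := ℝ)).isClosed hα
  obtain ⟨w₂, hw₂⟩ := hconv₂.exists_forall_re_div_pos
    ((finite_range β).isCompact_convexHull (𝕜 := ℝ)).isClosed hβ
  exact ⟨p, hp, segment_subset_mul_convexHull hw₁ hw₂ hp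
    (forall_mem_range.2 fun i => forall_mem_range.2 (hvert i))⟩
end

section
/- Let K1 = K(α,β) be a segment in ℂ with α, β > 0 real (so K1 ⊆ (0,∞)), and let K2 be a convex subset of ℂ. Then the Minkowski product K1K2 is convex. -/
open Set

open scoped Pointwise

theorem Convex.smul_of_subset_Ioi_s11 {𝕜 E : Type*} [Field 𝕜] [LinearOrder 𝕜] [IsStrictOrderedRing 𝕜]
    [AddCommGroup E] [Module 𝕜 E] {s : Set 𝕜} {K : Set E} (hs : Convex 𝕜 s)
    (hs_pos : s ⊆ Ioi 0) (hK : Convex 𝕜 K) : Convex 𝕜 (s • K) := by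
  rintro _ ⟨r, hr, x, hx, rfl⟩ _ ⟨q, hq, y, hy, rfl⟩ a b ha hb hab
  have hw : a * r + b * q ∈ s := hs hr hq ha hb hab
  have hw_pos : 0 < a * r + b * q := hs_pos hw
  have hr_pos : 0 < r := hs_pos hr
  have hq_pos : 0 < q := hs_pos hq
  -- `a • r • x + b • q • y = w • (a r / w • x + b q / w • y)` with `w = a r + b q ∈ s`.
  refine ⟨a * r + b * q, hw, (a * r / (a * r + b * q)) • x + (b * q / (a * r + b * q)) • y,
    hK hx hy (by positivity) (by positivity) ?_, ?_⟩
  · field_simp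
  · simp only [smul_add, smul_smul]
    congr 1 <;> congr 1 <;> field_simp

theorem Complex.segment_ofReal (α β : ℝ) :
    segment ℝ (α : ℂ) (β : ℂ) = ((↑) : ℝ → ℂ) '' segment ℝ α β := by
  simpa using (image_segment ℝ (Complex.ofRealCLM : ℝ →L[ℝ] ℂ).toLinearMap.toAffineMap α β).symm

theorem stmt_11 (α β : ℝ) (hα : 0 < α) (hβ : 0 < β) (K2 : Set ℂ) (hK2 : Convex ℝ K2) :
    Convex ℝ (Set.image2 (· * ·) (segment ℝ (α : ℂ) (β : ℂ)) K2) := by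
  have h_eq : Set.image2 (· * ·) (segment ℝ (α : ℂ) (β : ℂ)) K2 = segment ℝ α β • K2 := by
    simp only [Complex.segment_ofReal, image2_image_left, ← Complex.real_smul]
    rfl
  rw [h_eq]
  exact (convex_segment α β).smul_of_subset_Ioi_s11 ((convex_Ioi 0).segment_subset hα hβ) hK2
end

section
/- Let 0 < r ≤ 1 and let b ∈ ℂ with |b - 1| ≤ r. Then |b - (1 - r²)| ≤ |b|·r; equivalently, the point 1 - r² belongs to the disk b·D(1,r) = D(b, |b|r). -/
/-!
Writing `x = u + w` with `‖w‖ ≤ r`, the defect `‖x‖²r² - ‖x - (1 - r²)u‖²` factors as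
`(r² - ‖w‖²)(1 - r²)`, a product of two nonnegative numbers when `r ≤ 1`.
-/

open Complex

theorem norm_sq_mul_sq_sub_norm_sub_smul_sq {E : Type*} [NormedAddCommGroup E]
    [InnerProductSpace ℝ E] {u : E} (hu : ‖u‖ = 1) (x : E) (r : ℝ) :
    ‖x‖ ^ 2 * r ^ 2 - ‖x - (1 - r ^ 2) • u‖ ^ 2 = (r ^ 2 - ‖x - u‖ ^ 2) * (1 - r ^ 2) := by
  simp only [norm_sub_sq_real, inner_smul_right, norm_smul, Real.norm_eq_abs, mul_pow, sq_abs, hu]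
  ring

theorem norm_sub_smul_le_of_norm_sub_le {E : Type*} [NormedAddCommGroup E]
    [InnerProductSpace ℝ E] {u x : E} {r : ℝ} (hu : ‖u‖ = 1) (hr1 : r ≤ 1) (hx : ‖x - u‖ ≤ r) :
    ‖x - (1 - r ^ 2) • u‖ ≤ ‖x‖ * r := by
  have hr : 0 ≤ r := (norm_nonneg _).trans hx
  refine (pow_le_pow_iff_left₀ (norm_nonneg _) (by positivity) two_ne_zero).mp ?_
  have hdefect := norm_sq_mul_sq_sub_norm_sub_smul_sq hu x r
  have hdefect_nonneg : 0 ≤ (r ^ 2 - ‖x - u‖ ^ 2) * (1 - r ^ 2) :=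
    mul_nonneg (sub_nonneg.2 (pow_le_pow_left₀ (norm_nonneg _) hx 2))
      (sub_nonneg.2 (pow_le_one₀ hr hr1))
  linarith [mul_pow ‖x‖ r 2]

theorem stmt_14_general (r : ℝ) (hr1 : r ≤ 1) (b : ℂ) (hb : ‖b - 1‖ ≤ r) :
    ‖b - (1 - (r : ℂ) ^ 2)‖ ≤ ‖b‖ * r := by
  have h := norm_sub_smul_le_of_norm_sub_le (E := ℂ) norm_one hr1 hb
  rwa [real_smul, mul_one, ofReal_sub, ofReal_one, ofReal_pow] at h

theorem stmt_14 (r : ℝ) (hr : 0 < r) (hr1 : r ≤ 1) (b : ℂ) (hb : ‖b - 1‖ ≤ r) :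
    ‖b - (1 - (r : ℂ) ^ 2)‖ ≤ ‖b‖ * r :=
  stmt_14_general r hr1 b hb
end

section
/- Let 0 < r ≤ 1 and let S be a nonempty subset of the closed disk D(1,r). Then the Minkowski product D(1,r)·S is star-shaped with 1 - r² as a star center. -/
open Complex Set Metric

/-!
`D(1, r) · S` is the union over `s ∈ S` of the disks `D(1, r) · s = D(s, r‖s‖)`. Each of them is
convex and contains `1 - r²`, since
`(r‖s‖)² - ‖s - (1 - r²)‖² = (r² - ‖s - 1‖²)(1 - r²) ≥ 0` for `‖s - 1‖ ≤ r ≤ 1`.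
A union of convex sets with a common point is star-shaped about that point.
-/

lemma ofReal_one_sub_sq_mem_closedBall {r : ℝ} (hr1 : r ≤ 1) {s : ℂ}
    (hs : s ∈ closedBall (1 : ℂ) r) :
    ((1 - r ^ 2 : ℝ) : ℂ) ∈ closedBall s (r * ‖s‖) := by
  rw [mem_closedBall_iff_norm] at hs
  rw [mem_closedBall_iff_norm']
  have hr0 : 0 ≤ r := (norm_nonneg _).trans hs
  have hid : (r * ‖s‖) ^ 2 - ‖s - ((1 - r ^ 2 : ℝ) : ℂ)‖ ^ 2
      = (r ^ 2 - ‖s - 1‖ ^ 2) * (1 - r ^ 2) := by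
    simp only [← normSq_eq_norm_sq, normSq_apply, mul_pow, sub_re, sub_im, ofReal_re,
      ofReal_im, one_re, one_im]
    ring
  have hsq : ‖s - ((1 - r ^ 2 : ℝ) : ℂ)‖ ^ 2 ≤ (r * ‖s‖) ^ 2 := by
    have : 0 ≤ (r ^ 2 - ‖s - 1‖ ^ 2) * (1 - r ^ 2) :=
      mul_nonneg (by nlinarith [norm_nonneg (s - 1)]) (by nlinarith)
    linarith
  exact pow_le_pow_iff_left₀ (norm_nonneg _) (by positivity) two_ne_zero |>.mp hsq

lemma image_mul_right_closedBall_one {r : ℝ} (hr : 0 ≤ r) (s : ℂ) :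
    (· * s) '' closedBall (1 : ℂ) r = closedBall s (r * ‖s‖) := by
  simp_rw [mul_comm _ s, ← smul_eq_mul, image_smul, smul_closedBall s (1 : ℂ) hr, smul_eq_mul,
    mul_one, mul_comm ‖s‖]

lemma image2_mul_closedBall_one_eq_biUnion {r : ℝ} (hr : 0 ≤ r) (S : Set ℂ) :
    image2 (· * ·) (closedBall (1 : ℂ) r) S = ⋃ s ∈ S, closedBall s (r * ‖s‖) := by
  simp_rw [← image_mul_right_closedBall_one hr]
  exact (iUnion_mul_right_image).symm

theorem starConvex_image2_mul_closedBall_one {r : ℝ} (hr : 0 ≤ r) (hr1 : r ≤ 1) {S : Set ℂ}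
    (hS : S ⊆ closedBall (1 : ℂ) r) :
    StarConvex ℝ ((1 - r ^ 2 : ℝ) : ℂ) (image2 (· * ·) (closedBall (1 : ℂ) r) S) := by
  rw [image2_mul_closedBall_one_eq_biUnion hr]
  exact starConvex_iUnion₂ fun s hs ↦
    (convex_closedBall _ _).starConvex (ofReal_one_sub_sq_mem_closedBall hr1 (hS hs))

theorem stmt_15 (r : ℝ) (hr : 0 < r) (hr1 : r ≤ 1) (S : Set ℂ)
    (hS : S.Nonempty) (hSsub : S ⊆ Metric.closedBall (1 : ℂ) r) :
    ((1 - r ^ 2 : ℝ) : ℂ) ∈ Set.image2 (· * ·) (Metric.closedBall (1 : ℂ) r) S ∧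
      ∀ z ∈ Set.image2 (· * ·) (Metric.closedBall (1 : ℂ) r) S, ∀ t ∈ Set.Icc (0:ℝ) 1,
        ((1 - t) : ℂ) * ((1 - r ^ 2 : ℝ) : ℂ) + (t : ℂ) * z ∈
          Set.image2 (· * ·) (Metric.closedBall (1 : ℂ) r) S := by
  have hstar := starConvex_image2_mul_closedBall_one hr.le hr1 hSsub
  refine ⟨?_, fun z hz t ⟨ht0, ht1⟩ ↦ ?_⟩
  · obtain ⟨s, hs⟩ := hS
    rw [image2_mul_closedBall_one_eq_biUnion hr.le]
    exact mem_biUnion hs (ofReal_one_sub_sq_mem_closedBall hr1 (hSsub hs))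
  · simpa [Complex.real_smul] using hstar hz (sub_nonneg.2 ht1) ht0 (sub_add_cancel 1 t)
end

section
/- Let 0 < r ≤ 1 and b ∈ ℂ with Re(b) ≥ 1. Then the Minkowski product K(1,b)·D(1,r) is star-shaped with 1 as star center: for every z in the product and t ∈ [0,1], tz + (1-t) is also in the product. -/
/-!
Write a point of the product as `s * d` with `s` on the segment and `d` in the disk, and put
`c = t * s + (1 - t)`, which lies on the segment `[1, s]`. Then
`t * (s * d) + (1 - t) = c * (1 + (t * s / c) * (d - 1))`, and since `Re s ≥ 0` we have
`|t * s| ≤ |c|`, so the second factor is again in the disk `D(1, r)`.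
-/

open Complex Set Metric

theorem add_smul_sub_mem_closedBall {𝕜 E : Type*} [NormedField 𝕜] [SeminormedAddCommGroup E]
    [NormedSpace 𝕜 E] {x y : E} {r : ℝ} {k : 𝕜} (hk : ‖k‖ ≤ 1) (hy : y ∈ closedBall x r) :
    x + k • (y - x) ∈ closedBall x r := by
  rw [mem_closedBall, dist_eq_norm] at hy ⊢
  calc ‖x + k • (y - x) - x‖ = ‖k‖ * ‖y - x‖ := by rw [add_sub_cancel_left, norm_smul]
    _ ≤ 1 * r := mul_le_mul hk hy (norm_nonneg _) zero_le_one
    _ = r := one_mul r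

namespace Complex

theorem mul_norm_le_norm_mul_add_one_sub {s : ℂ} (hs : 0 ≤ s.re) {t : ℝ} (ht₀ : 0 ≤ t)
    (ht₁ : t ≤ 1) : t * ‖s‖ ≤ ‖t * s + (1 - t)‖ := by
  refine le_of_pow_le_pow_left₀ two_ne_zero (norm_nonneg _) ?_
  have hst : 0 ≤ t * (1 - t) * s.re := mul_nonneg (mul_nonneg ht₀ (sub_nonneg.2 ht₁)) hs
  simp only [mul_pow, Complex.sq_norm, normSq_apply, add_re, add_im, mul_re, mul_im, ofReal_re,
    ofReal_im, sub_re, sub_im, one_re, one_im]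
  nlinarith

theorem re_mul_add_one_sub_pos {s : ℂ} (hs : 0 < s.re) {t : ℝ} (ht₀ : 0 ≤ t) (ht₁ : t ≤ 1) :
    0 < (t * s + (1 - t) : ℂ).re := by
  simp only [add_re, mul_re, ofReal_re, ofReal_im, sub_re, one_re, zero_mul, sub_zero]
  rcases ht₁.lt_or_eq with ht₁ | rfl
  · nlinarith
  · simpa using hs

theorem starConvex_image2_mul_closedBall {S : Set ℂ} (hS : StarConvex ℝ 1 S)
    (hS_re : ∀ s ∈ S, 0 < s.re) (r : ℝ) :
    StarConvex ℝ 1 (image2 (· * ·) S (closedBall 1 r)) := by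
  rintro _ ⟨s, hs, d, hd, rfl⟩ a t ha ht hat
  obtain rfl : a = 1 - t := eq_sub_of_add_eq hat
  have ht₁ : t ≤ 1 := sub_nonneg.1 ha
  set c : ℂ := t * s + (1 - t) with hc_def
  have hc : c ≠ 0 := fun h ↦ (re_mul_add_one_sub_pos (hS_re s hs) ht ht₁).ne' (by rw [← hc_def, h, zero_re])
  have hc_mem : c ∈ S := by
    convert hS hs ha ht hat using 1
    simp only [hc_def, real_smul, mul_one, ofReal_sub, ofReal_one]
    ring
  have hk : ‖(t * s / c : ℂ)‖ ≤ 1 := by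
    rw [norm_div, norm_mul, norm_real, Real.norm_of_nonneg ht]
    exact div_le_one_of_le₀ (mul_norm_le_norm_mul_add_one_sub (hS_re s hs).le ht ht₁)
      (norm_nonneg _)
  refine ⟨c, hc_mem, 1 + (t * s / c) • (d - 1), add_smul_sub_mem_closedBall hk hd, ?_⟩
  simp only [smul_eq_mul, real_smul, mul_one, ofReal_sub, ofReal_one]
  field_simp
  ring

end Complex

theorem stmt_16_general (r : ℝ) (b : ℂ) (hb : 1 ≤ b.re) :
    ∀ z ∈ Set.image2 (· * ·) (segment ℝ (1 : ℂ) b) (Metric.closedBall (1 : ℂ) r),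
      ∀ t ∈ Set.Icc (0:ℝ) 1,
        (t : ℂ) * z + ((1 - t) : ℂ) ∈
          Set.image2 (· * ·) (segment ℝ (1 : ℂ) b) (Metric.closedBall (1 : ℂ) r) := by
  rintro z hz t ⟨ht₀, ht₁⟩
  have hseg_re : ∀ s ∈ segment ℝ (1 : ℂ) b, 0 < s.re := fun s hs ↦
    zero_lt_one.trans_le <| (convex_halfSpace_re_ge 1).segment_subset (by simp) hb hs
  have h := starConvex_image2_mul_closedBall ((convex_segment 1 b).starConvex (left_mem_segment ℝ 1 b)) hseg_re r hz
    (sub_nonneg.2 ht₁) ht₀ (sub_add_cancel 1 t)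
  convert h using 1
  simp only [real_smul, mul_one, ofReal_sub, ofReal_one]
  ring

theorem stmt_16 (r : ℝ) (hr : 0 < r) (hr1 : r ≤ 1) (b : ℂ) (hb : 1 ≤ b.re) :
    ∀ z ∈ Set.image2 (· * ·) (segment ℝ (1 : ℂ) b) (Metric.closedBall (1 : ℂ) r),
      ∀ t ∈ Set.Icc (0:ℝ) 1,
        (t : ℂ) * z + ((1 - t) : ℂ) ∈
          Set.image2 (· * ·) (segment ℝ (1 : ℂ) b) (Metric.closedBall (1 : ℂ) r) :=
  stmt_16_general r b hb
end

section
/- Let 0 < r ≤ 1, and suppose c = 1 + sRe^{iθ} with s ∈ [0,1], R ≥ 0, θ ∈ [-π/2, π/2]. If z ∈ ℂ satisfies |z - c| ≤ |c|·r, then for every t ∈ [0,1], |tz + (1-t) - (1 + tsRe^{iθ})| ≤ |1 + tsRe^{iθ}|·r. -/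
/-!
The map `z ↦ t z + (1 - t)` is the homothety of ratio `t` about `1`: it sends the disc of
centre `1 + w` and radius `‖1 + w‖ r` onto the disc of centre `1 + t w` and radius
`t ‖1 + w‖ r`. Since `w = s R e^{iθ}` lies in the closed right half-plane, moving it towards `0`
shrinks `‖1 + w‖` at most proportionally: `t ‖1 + w‖ ≤ ‖1 + t w‖`.
-/

open Complex

/-- `‖1 + t w‖² - t² ‖1 + w‖² = (1 - t²) + 2 t (1 - t) Re w`. -/
theorem Complex.mul_norm_one_add_le_norm_one_add_mul {w : ℂ} (hw : 0 ≤ w.re) {t : ℝ}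
    (ht0 : 0 ≤ t) (ht1 : t ≤ 1) : t * ‖1 + w‖ ≤ ‖1 + (t : ℂ) * w‖ := by
  refine (pow_le_pow_iff_left₀ (by positivity) (norm_nonneg _) two_ne_zero).1 ?_
  simp only [mul_pow, Complex.sq_norm, Complex.normSq_apply, add_re, add_im, one_re, one_im,
    re_ofReal_mul, im_ofReal_mul]
  nlinarith [mul_nonneg (mul_nonneg ht0 (sub_nonneg.2 ht1)) hw, mul_nonneg ht0 (sub_nonneg.2 ht1)]

theorem Complex.re_ofReal_mul_exp_mul_I_nonneg {ρ θ : ℝ} (hρ : 0 ≤ ρ)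
    (hθ : θ ∈ Set.Icc (-(Real.pi / 2)) (Real.pi / 2)) : 0 ≤ ((ρ : ℂ) * exp (θ * I)).re := by
  rw [re_ofReal_mul, exp_ofReal_mul_I_re]
  exact mul_nonneg hρ (Real.cos_nonneg_of_mem_Icc hθ)

theorem stmt_17_general (r : ℝ) (hr : 0 < r) (s R θ : ℝ)
    (hs : s ∈ Set.Icc (0:ℝ) 1) (hR : 0 ≤ R) (hθ : θ ∈ Set.Icc (-(Real.pi / 2)) (Real.pi / 2))
    (z : ℂ)
    (hz : ‖z - (1 + (s : ℂ) * R * Complex.exp (θ * Complex.I))‖ ≤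
      ‖1 + (s : ℂ) * R * Complex.exp (θ * Complex.I)‖ * r) :
    ∀ t ∈ Set.Icc (0:ℝ) 1,
      ‖(t : ℂ) * z + ((1 - t) : ℂ) -
          (1 + (t : ℂ) * s * R * Complex.exp (θ * Complex.I))‖ ≤
        ‖1 + (t : ℂ) * s * R * Complex.exp (θ * Complex.I)‖ * r := by
  rintro t ⟨ht0, ht1⟩
  set w : ℂ := (s : ℂ) * R * exp (θ * I) with hw
  have hw_re : 0 ≤ w.re := by
    simpa only [hw, ofReal_mul] using re_ofReal_mul_exp_mul_I_nonneg (mul_nonneg hs.1 hR) hθ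
  have hdisp : (t : ℂ) * z + ((1 - t) : ℂ) - (1 + (t : ℂ) * s * R * exp (θ * I))
      = t * (z - (1 + w)) := by
    rw [hw]; ring
  have hcenter : (t : ℂ) * s * R * exp (θ * I) = t * w := by rw [hw]; ring
  calc ‖(t : ℂ) * z + ((1 - t) : ℂ) - (1 + (t : ℂ) * s * R * exp (θ * I))‖
      = t * ‖z - (1 + w)‖ := by rw [hdisp, norm_mul, Complex.norm_of_nonneg ht0]
    _ ≤ t * (‖1 + w‖ * r) := by gcongr
    _ = (t * ‖1 + w‖) * r := (mul_assoc _ _ _).symm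
    _ ≤ ‖1 + (t : ℂ) * s * R * exp (θ * I)‖ * r := by
      rw [hcenter]
      gcongr
      exact mul_norm_one_add_le_norm_one_add_mul hw_re ht0 ht1

theorem stmt_17 (r : ℝ) (hr : 0 < r) (hr1 : r ≤ 1) (s R θ : ℝ)
    (hs : s ∈ Set.Icc (0:ℝ) 1) (hR : 0 ≤ R) (hθ : θ ∈ Set.Icc (-(Real.pi / 2)) (Real.pi / 2))
    (z : ℂ)
    (hz : ‖z - (1 + (s : ℂ) * R * Complex.exp (θ * Complex.I))‖ ≤
      ‖1 + (s : ℂ) * R * Complex.exp (θ * Complex.I)‖ * r) :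
    ∀ t ∈ Set.Icc (0:ℝ) 1,
      ‖(t : ℂ) * z + ((1 - t) : ℂ) -
          (1 + (t : ℂ) * s * R * Complex.exp (θ * Complex.I))‖ ≤
        ‖1 + (t : ℂ) * s * R * Complex.exp (θ * Complex.I)‖ * r :=
  stmt_17_general r hr s R θ hs hR hθ z hz
end

section
/- Let S ⊆ ℂ be star-shaped with star center s such that |s| ≤ |z| for all z ∈ S, and let D(a,r) be any closed disk in ℂ. Then the Minkowski product D(a,r)·S is star-shaped. -/
/-!
Take `p = a * s`. For `b ∈ D(a, r)`, `w ∈ S` and `t ∈ [0, 1]`, the point `u = (1 - t) s + t w`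
lies in `S` and `(1 - t) a s + t b w = c u` with `c = a + t (b - a) w / u`. As `s` is the point of
the segment `[s, w] ⊆ S` nearest to `0`, we have `⟪s, w - s⟫ ≥ 0`; this gives `|t w| ≤ |u|`,
hence `|c - a| ≤ |b - a| ≤ r`.
-/

open Complex Set Metric

open scoped InnerProductSpace

section InnerProductSpace

variable {E : Type*} [NormedAddCommGroup E] [InnerProductSpace ℝ E]

theorem real_inner_sub_nonneg_of_forall_segment_norm_le {s w : E}
    (h : ∀ z ∈ segment ℝ s w, ‖s‖ ≤ ‖z‖) : 0 ≤ ⟪s, w - s⟫_ℝ := by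
  have : Nonempty (segment ℝ s w) := ⟨⟨s, left_mem_segment ℝ s w⟩⟩
  have hmin : ‖0 - s‖ = ⨅ z : segment ℝ s w, ‖0 - (z : E)‖ := by
    refine le_antisymm (le_ciInf fun z => ?_) <|
      ciInf_le (f := fun z : segment ℝ s w => ‖0 - (z : E)‖) ⟨0, ?_⟩ ⟨s, left_mem_segment ℝ s w⟩
    · simpa using h z z.2
    · rintro _ ⟨z, rfl⟩
      positivity
  have := (norm_eq_iInf_iff_real_inner_le_zero (convex_segment s w) (left_mem_segment ℝ s w)).1
    hmin w (right_mem_segment ℝ s w)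
  simpa [inner_neg_left] using this

theorem norm_smul_le_norm_one_sub_smul_add_smul_of_inner_nonneg {s w : E}
    (hsw : 0 ≤ ⟪s, w - s⟫_ℝ) {t : ℝ} (ht : t ∈ Icc (0 : ℝ) 1) : ‖t • w‖ ≤ ‖(1 - t) • s + t • w‖ := by
  obtain ⟨ht0, ht1⟩ := ht
  set v := w - s
  have hw : w = s + v := by simp [v]
  have hu : (1 - t) • s + t • w = s + t • v := by rw [hw]; module
  -- ‖s + t v‖² - ‖t (s + v)‖² = (1 - t²) ‖s‖² + 2 t (1 - t) ⟪s, v⟫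
  refine sq_le_sq₀ (norm_nonneg _) (norm_nonneg _) |>.1 ?_
  rw [hu, hw, ← real_inner_self_eq_norm_sq, ← real_inner_self_eq_norm_sq]
  simp only [inner_add_left, inner_add_right, inner_smul_left, inner_smul_right,
    real_inner_comm s v, RCLike.conj_to_real]
  nlinarith [mul_nonneg (by nlinarith : 0 ≤ 1 - t ^ 2) (real_inner_self_nonneg (x := s)),
    mul_nonneg (mul_nonneg ht0 (sub_nonneg.2 ht1)) hsw]

end InnerProductSpace

theorem exists_mem_closedBall_mul_eq_add_mul {𝕜 : Type*} [NormedField 𝕜] {a b u x : 𝕜}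
    {r : ℝ} (hb : b ∈ closedBall a r) (hx : ‖x‖ ≤ ‖u‖) :
    ∃ c ∈ closedBall a r, c * u = a * u + (b - a) * x := by
  refine ⟨a + (b - a) * (x / u), ?_, ?_⟩
  · have hxu : ‖x / u‖ ≤ 1 := by
      rw [norm_div]; exact div_le_one_of_le₀ hx (norm_nonneg u)
    rw [mem_closedBall, dist_eq_norm, add_sub_cancel_left, norm_mul]
    exact (mul_le_of_le_one_right (norm_nonneg _) hxu).trans (mem_closedBall_iff_norm.1 hb)
  · rcases eq_or_ne u 0 with rfl | hu
    · simp [norm_le_zero_iff.1 (by simpa using hx)]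
    · field_simp

theorem stmt_18 (S : Set ℂ) (s : ℂ) (hs : s ∈ S)
    (hstar : ∀ z ∈ S, ∀ t ∈ Set.Icc (0:ℝ) 1, ((1 - t) : ℂ) * s + (t : ℂ) * z ∈ S)
    (hmin : ∀ z ∈ S, ‖s‖ ≤ ‖z‖)
    (a : ℂ) (r : ℝ) (hr : 0 ≤ r) :
    ∃ p ∈ Set.image2 (· * ·) (Metric.closedBall a r) S,
      ∀ z ∈ Set.image2 (· * ·) (Metric.closedBall a r) S, ∀ t ∈ Set.Icc (0:ℝ) 1,
        ((1 - t) : ℂ) * p + (t : ℂ) * z ∈ Set.image2 (· * ·) (Metric.closedBall a r) S := by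
  have hsmul : ∀ w (t : ℝ), ((1 - t) : ℂ) * s + (t : ℂ) * w = (1 - t) • s + t • w := by
    intro w t; simp [Complex.real_smul]
  refine ⟨a * s, mem_image2_of_mem (mem_closedBall_self hr) hs, ?_⟩
  rintro _ ⟨b, hb, w, hw, rfl⟩ t ht
  have hseg : segment ℝ s w ⊆ S := by
    rw [segment_eq_image]
    rintro _ ⟨l, hl, rfl⟩
    simpa [hsmul] using hstar w hw l hl
  have hsw := real_inner_sub_nonneg_of_forall_segment_norm_le fun z hz => hmin z (hseg hz)
  have htw : ‖(t : ℂ) * w‖ ≤ ‖(1 - t) • s + t • w‖ := by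
    simpa [Complex.real_smul] using norm_smul_le_norm_one_sub_smul_add_smul_of_inner_nonneg hsw ht
  obtain ⟨c, hc, hcu⟩ := exists_mem_closedBall_mul_eq_add_mul hb htw
  refine ⟨c, hc, _, hseg ⟨1 - t, t, sub_nonneg.2 ht.2, ht.1, by ring, rfl⟩, ?_⟩
  simp only [Complex.real_smul, Complex.ofReal_sub, Complex.ofReal_one] at hcu ⊢
  linear_combination hcu
end
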